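/- Let g : R^n -> R^{n x m} be continuous, let t > 0, let (u_m) be a sequence in L^2((0,infinity); R^m) converging weakly to u-bar and bounded in norm, and let (x_m) be a sequence of continuous functions on [0, t] converging uniformly to a continuous function x-bar. Then \int_0^t g(x_m(s)) u_m(s) ds converges to \int_0^t g(x-bar(s)) u-bar(s) ds in R^n as m -> infinity. -/

import Mathlib

open MeasureTheory Set Filter
open scoped ENNReal InnerProductSpace Topology

/-!
Split `∫ g(xₘ) uₘ = ∫ (g(xₘ) - g(x̄)) uₘ + ∫ g(x̄) uₘ` over `(0, t]`. Since `g` is uniformly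
continuous near the compact set `x̄([0, t])`, the operator norm of `g(xₘ) - g(x̄)` tends to `0`
uniformly, while `∫₀ᵗ ‖uₘ‖` stays bounded: a weakly convergent sequence is bounded by
Banach–Steinhaus, and `L²` embeds in `L¹` on a finite interval. For the second term, pairing with
`y ∈ ℝⁿ` gives `⟪y, ∫ g(x̄) uₘ⟫ = ∫ ⟪uₘ, g(x̄)* y⟫`, the pairing of `uₘ` with a fixed `L²` function;
in finite dimension this coordinatewise convergence is convergence.
-/

theorem tendsto_of_forall_inner_tendsto {F ι : Type*} [NormedAddCommGroup F] [InnerProductSpace ℝ F]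
    [FiniteDimensional ℝ F] {l : Filter ι} {f : ι → F} {a : F}
    (h : ∀ y, Tendsto (fun i => ⟪y, f i⟫_ℝ) l (𝓝 ⟪y, a⟫_ℝ)) : Tendsto f l (𝓝 a) := by
  let b := stdOrthonormalBasis ℝ F
  have hsum := tendsto_finsetSum Finset.univ fun i _ => (h (b i)).smul_const (b i)
  simpa only [b.sum_repr'] using hsum

theorem Continuous.comp_tendstoUniformlyOn_of_isCompact {α β γ ι : Type*} [UniformSpace β]
    [UniformSpace γ] {g : β → γ} (hg : Continuous g) {F : ι → α → β} {f : α → β} {p : Filter ι}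
    {K : Set α} (hK : IsCompact (f '' K)) (h : TendstoUniformlyOn F f p K) :
    TendstoUniformlyOn (fun i x => g (F i x)) (fun x => g (f x)) p K := by
  intro r hr
  have hU := hK.uniformContinuousAt_of_continuousAt g (fun b _ => hg.continuousAt) hr
  filter_upwards [h _ hU] with i hi x hx
  exact hi x hx (mem_image_of_mem f hx)

theorem ContinuousOn.memLp_top_restrict {X G : Type*} [TopologicalSpace X] [MeasurableSpace X]
    [OpensMeasurableSpace X] [NormedAddCommGroup G] [SecondCountableTopologyEither X G]
    {μ : Measure X} {f : X → G} {K s : Set X} (hf : ContinuousOn f K) (hK : IsCompact K)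
    (hs : MeasurableSet s) (hsK : s ⊆ K) : MemLp f ∞ (μ.restrict s) := by
  obtain ⟨C, hC⟩ := hK.exists_bound_of_continuousOn hf
  refine memLp_top_of_bound ((hf.mono hsK).aestronglyMeasurable hs) C ?_
  filter_upwards [ae_restrict_mem hs] with x hx using hC x (hsK hx)

section WeakL2

variable {α E : Type*} [MeasurableSpace α] [NormedAddCommGroup E] [InnerProductSpace ℝ E]

def WeakTendstoL2 (μ : Measure α) (u : ℕ → α → E) (ubar : α → E) : Prop :=
  ∀ v : α → E, MemLp v 2 μ →
    Tendsto (fun k => ∫ x, ⟪u k x, v x⟫_ℝ ∂μ) atTop (𝓝 (∫ x, ⟪ubar x, v x⟫_ℝ ∂μ))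

variable {μ : Measure α} {u : ℕ → α → E} {ubar : α → E}

theorem WeakTendstoL2.restrict (h : WeakTendstoL2 μ u ubar) {s : Set α} (hs : MeasurableSet s) :
    WeakTendstoL2 (μ.restrict s) u ubar := by
  intro v hv
  have hind : ∀ w : α → E, ∫ x, ⟪w x, s.indicator v x⟫_ℝ ∂μ = ∫ x in s, ⟪w x, v x⟫_ℝ ∂μ := by
    intro w
    rw [← integral_indicator hs]
    congr 1 with x
    by_cases hx : x ∈ s <;> simp [hx]
  simpa only [hind] using h (s.indicator v) ((memLp_indicator_iff_restrict hs).2 hv)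

theorem WeakTendstoL2.exists_eLpNorm_le [CompleteSpace E] (hu : ∀ k, MemLp (u k) 2 μ)
    (h : WeakTendstoL2 μ u ubar) : ∃ C : ℝ, ∀ k, eLpNorm (u k) 2 μ ≤ ENNReal.ofReal C := by
  let T : ℕ → Lp E 2 μ →L[ℝ] ℝ := fun k => innerSL ℝ ((hu k).toLp (u k))
  have hT : ∀ k (v : Lp E 2 μ), T k v = ∫ x, ⟪u k x, v x⟫_ℝ ∂μ := by
    intro k v
    refine (L2.inner_def _ _).trans (integral_congr_ae ?_)
    filter_upwards [(hu k).coeFn_toLp] with x hx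
    rw [hx]
  have hpointwise : ∀ v : Lp E 2 μ, ∃ C, ∀ k, ‖T k v‖ ≤ C := by
    intro v
    obtain ⟨C, hC⟩ := ((h v (Lp.memLp v)).congr fun k => (hT k v).symm).norm.bddAbove_range
    exact ⟨C, fun k => hC ⟨k, rfl⟩⟩
  obtain ⟨C, hC⟩ := banach_steinhaus hpointwise
  refine ⟨C, fun k => ?_⟩
  rw [← Lp.enorm_toLp (hu k), ← ofReal_norm]
  exact ENNReal.ofReal_le_ofReal (by simpa [T, innerSL_apply_norm] using hC k)

theorem WeakTendstoL2.exists_integral_norm_le [CompleteSpace E] [IsFiniteMeasure μ]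
    (hu : ∀ k, MemLp (u k) 2 μ) (h : WeakTendstoL2 μ u ubar) :
    ∃ B : ℝ, ∀ k, ∫ x, ‖u k x‖ ∂μ ≤ B := by
  obtain ⟨C, hC⟩ := h.exists_eLpNorm_le hu
  refine ⟨(ENNReal.ofReal C * μ univ ^ (1 / 2 : ℝ)).toReal, fun k => ?_⟩
  rw [integral_norm_eq_lintegral_enorm (hu k).1, ← eLpNorm_one_eq_lintegral_enorm]
  refine ENNReal.toReal_mono (by finiteness) ?_
  calc eLpNorm (u k) 1 μ
        ≤ eLpNorm (u k) 2 μ * μ univ ^ (1 / (1 : ℝ≥0∞).toReal - 1 / (2 : ℝ≥0∞).toReal) :=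
        eLpNorm_le_eLpNorm_mul_rpow_measure_univ one_le_two (hu k).1
    _ ≤ ENNReal.ofReal C * μ univ ^ (1 / 2 : ℝ) := by
        norm_num
        gcongr
        exact hC k


variable {F : Type*} [NormedAddCommGroup F] [InnerProductSpace ℝ F]

theorem integrable_clm_apply [IsFiniteMeasure μ] {φ : α → E →L[ℝ] F} {w : α → E}
    (hφ : MemLp φ ∞ μ) (hw : MemLp w 2 μ) : Integrable (fun x => φ x (w x)) μ :=
  ((ContinuousLinearMap.id ℝ (E →L[ℝ] F)).memLp_of_bilin 2 hφ hw).integrable one_le_two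

theorem norm_integral_clm_apply_le {φ : α → E →L[ℝ] F} {w : α → E} {ε : ℝ}
    (hφ : ∀ᵐ x ∂μ, ‖φ x‖ ≤ ε) (hw : Integrable w μ) :
    ‖∫ x, φ x (w x) ∂μ‖ ≤ ε * ∫ x, ‖w x‖ ∂μ := by
  rw [← integral_const_mul]
  refine norm_integral_le_of_norm_le (hw.norm.const_mul ε) ?_
  filter_upwards [hφ] with x hx
  exact (φ x).le_opNorm _ |>.trans (mul_le_mul_of_nonneg_right hx (norm_nonneg _))

theorem tendsto_integral_clm_apply_zero {φ : ℕ → α → E →L[ℝ] F} {B : ℝ}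
    (hφ : ∀ ε > 0, ∀ᶠ k in atTop, ∀ᵐ x ∂μ, ‖φ k x‖ ≤ ε) (hu : ∀ k, Integrable (u k) μ)
    (hB : ∀ k, ∫ x, ‖u k x‖ ∂μ ≤ B) :
    Tendsto (fun k => ∫ x, φ k x (u k x) ∂μ) atTop (𝓝 0) := by
  have hB0 : 0 ≤ B := (integral_nonneg fun x => norm_nonneg (u 0 x)).trans (hB 0)
  rw [NormedAddGroup.tendsto_nhds_zero]
  intro ε hε
  filter_upwards [hφ (ε / (B + 1)) (by positivity)] with k hk
  calc ‖∫ x, φ k x (u k x) ∂μ‖ ≤ ε / (B + 1) * ∫ x, ‖u k x‖ ∂μ :=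
        norm_integral_clm_apply_le hk (hu k)
    _ ≤ ε / (B + 1) * B := by gcongr; exact hB k
    _ < ε := by
        rw [div_mul_eq_mul_div, div_lt_iff₀ (by positivity)]
        nlinarith

theorem WeakTendstoL2.tendsto_integral_clm_apply [CompleteSpace E] [FiniteDimensional ℝ F]
    [IsFiniteMeasure μ] (h : WeakTendstoL2 μ u ubar) {φ : α → E →L[ℝ] F} (hφ : MemLp φ ∞ μ)
    (hu : ∀ k, MemLp (u k) 2 μ) (hubar : MemLp ubar 2 μ) :
    Tendsto (fun k => ∫ x, φ x (u k x) ∂μ) atTop (𝓝 (∫ x, φ x (ubar x) ∂μ)) := by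
  refine tendsto_of_forall_inner_tendsto fun y => ?_
  let adj : (E →L[ℝ] F) ≃ₗᵢ⋆[ℝ] (F →L[ℝ] E) := ContinuousLinearMap.adjoint
  let L : (E →L[ℝ] F) →L[ℝ] E :=
    (ContinuousLinearMap.apply ℝ E y).comp adj.toContinuousLinearEquiv.toContinuousLinearMap
  have hv : MemLp (fun x => L (φ x)) 2 μ := (L.comp_memLp' hφ).mono_exponent le_top
  have hinner : ∀ w : α → E, MemLp w 2 μ →
      ⟪y, ∫ x, φ x (w x) ∂μ⟫_ℝ = ∫ x, ⟪w x, L (φ x)⟫_ℝ ∂μ := by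
    intro w hw
    rw [← integral_inner (integrable_clm_apply hφ hw)]
    congr 1 with x
    simp [L, adj, ContinuousLinearMap.adjoint_inner_right, real_inner_comm]
  simpa only [hinner _ (hu _), hinner _ hubar] using h _ hv

theorem WeakTendstoL2.tendsto_integral_apply_of_tendstoUniformlyOn [CompleteSpace E]
    [FiniteDimensional ℝ F] {s : Set α} (hs : MeasurableSet s) [IsFiniteMeasure (μ.restrict s)]
    (h : WeakTendstoL2 (μ.restrict s) u ubar) (hu : ∀ k, MemLp (u k) 2 (μ.restrict s))
    (hubar : MemLp ubar 2 (μ.restrict s)) {φ : ℕ → α → E →L[ℝ] F} {φbar : α → E →L[ℝ] F}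
    (hφ : ∀ k, MemLp (φ k) ∞ (μ.restrict s)) (hφbar : MemLp φbar ∞ (μ.restrict s))
    (hφ_unif : TendstoUniformlyOn φ φbar atTop s) :
    Tendsto (fun k => ∫ x in s, φ k x (u k x) ∂μ) atTop (𝓝 (∫ x in s, φbar x (ubar x) ∂μ)) := by
  obtain ⟨B, hB⟩ := h.exists_integral_norm_le hu
  have hsmall : ∀ ε > 0, ∀ᶠ k in atTop, ∀ᵐ x ∂μ.restrict s, ‖(φ k - φbar) x‖ ≤ ε :=
    fun ε hε => (Metric.tendstoUniformlyOn_iff.1 hφ_unif ε hε).mono fun k hk =>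
      (ae_restrict_mem hs).mono fun x hx => by
        rw [Pi.sub_apply, ← dist_eq_norm, dist_comm]
        exact (hk x hx).le
  have hsplit : ∀ k, ∫ x in s, φ k x (u k x) ∂μ
      = ∫ x in s, (φ k - φbar) x (u k x) ∂μ + ∫ x in s, φbar x (u k x) ∂μ := by
    intro k
    rw [← integral_add (integrable_clm_apply ((hφ k).sub hφbar) (hu k))
      (integrable_clm_apply hφbar (hu k))]
    simp
  simpa only [hsplit, zero_add] using
    (tendsto_integral_clm_apply_zero hsmall (fun k => (hu k).integrable one_le_two) hB).add
      (h.tendsto_integral_clm_apply hφbar hu hubar)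

end WeakL2

theorem statement14_general (n m : ℕ)
    (g : EuclideanSpace ℝ (Fin n) → (EuclideanSpace ℝ (Fin m) →L[ℝ] EuclideanSpace ℝ (Fin n)))
    (hg : Continuous g)
    (t : ℝ) (ht : 0 < t)
    (u : ℕ → ℝ → EuclideanSpace ℝ (Fin m))
    (ubar : ℝ → EuclideanSpace ℝ (Fin m))
    (hu : ∀ k, MemLp (u k) 2 (volume.restrict (Set.Ioi (0:ℝ))))
    (hubar : MemLp ubar 2 (volume.restrict (Set.Ioi (0:ℝ))))
    -- weak convergence u_m ⇀ ū in L²((0,∞);ℝᵐ)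
    (hweak : ∀ v : ℝ → EuclideanSpace ℝ (Fin m),
      MemLp v 2 (volume.restrict (Set.Ioi (0:ℝ))) →
      Tendsto (fun k => ∫ s in Set.Ioi (0:ℝ), ⟪u k s, v s⟫_ℝ) atTop
        (nhds (∫ s in Set.Ioi (0:ℝ), ⟪ubar s, v s⟫_ℝ)))
    (x : ℕ → ℝ → EuclideanSpace ℝ (Fin n))
    (xbar : ℝ → EuclideanSpace ℝ (Fin n))
    (hx_cont : ∀ k, ContinuousOn (x k) (Set.Icc 0 t))
    (hxbar_cont : ContinuousOn xbar (Set.Icc 0 t))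
    (hx_unif : TendstoUniformlyOn x xbar atTop (Set.Icc 0 t)) :
    Tendsto (fun k => ∫ s in (0:ℝ)..t, g (x k s) (u k s)) atTop
      (nhds (∫ s in (0:ℝ)..t, g (xbar s) (ubar s))) := by
  have hres : (volume.restrict (Ioi (0:ℝ))).restrict (Ioc 0 t) = volume.restrict (Ioc 0 t) :=
    Measure.restrict_restrict_of_subset Ioc_subset_Ioi_self
  have hweak' : WeakTendstoL2 (volume.restrict (Ioc 0 t)) u ubar :=
    hres ▸ WeakTendstoL2.restrict hweak measurableSet_Ioc
  have hgx : ∀ k, MemLp (fun s => g (x k s)) ∞ (volume.restrict (Ioc 0 t)) := fun k =>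
    (hg.comp_continuousOn (hx_cont k)).memLp_top_restrict isCompact_Icc measurableSet_Ioc
      Ioc_subset_Icc_self
  have hgxbar : MemLp (fun s => g (xbar s)) ∞ (volume.restrict (Ioc 0 t)) :=
    (hg.comp_continuousOn hxbar_cont).memLp_top_restrict isCompact_Icc measurableSet_Ioc
      Ioc_subset_Icc_self
  have hgx_unif := (hg.comp_tendstoUniformlyOn_of_isCompact
    (isCompact_Icc.image_of_continuousOn hxbar_cont) hx_unif).mono Ioc_subset_Icc_self
  simp_rw [intervalIntegral.integral_of_le ht.le]
  exact hweak'.tendsto_integral_apply_of_tendstoUniformlyOn measurableSet_Ioc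
    (fun k => hres ▸ (hu k).restrict _) (hres ▸ hubar.restrict _) hgx hgxbar hgx_unif

/-- if `u_m ⇀ ū` weakly in `L²((0,∞);ℝᵐ)` with `(u_m)` bounded in norm,
and `x_m → x̄` uniformly on `[0,t]` with all `x_m` and `x̄` continuous, then
`∫₀^t g(x_m(s)) u_m(s) ds → ∫₀^t g(x̄(s)) ū(s) ds`. -/
theorem statement14 (n m : ℕ)
    (g : EuclideanSpace ℝ (Fin n) → (EuclideanSpace ℝ (Fin m) →L[ℝ] EuclideanSpace ℝ (Fin n)))
    (hg : Continuous g)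
    (t : ℝ) (ht : 0 < t)
    (u : ℕ → ℝ → EuclideanSpace ℝ (Fin m))
    (ubar : ℝ → EuclideanSpace ℝ (Fin m))
    (hu : ∀ k, MemLp (u k) 2 (volume.restrict (Set.Ioi (0:ℝ))))
    (hubar : MemLp ubar 2 (volume.restrict (Set.Ioi (0:ℝ))))
    -- (u_m) bounded in L²((0,∞);ℝᵐ)
    (hbdd : ∃ C : ℝ≥0∞, ∀ k, eLpNorm (u k) 2 (volume.restrict (Set.Ioi (0:ℝ))) ≤ C)
    -- weak convergence u_m ⇀ ū in L²((0,∞);ℝᵐ)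
    (hweak : ∀ v : ℝ → EuclideanSpace ℝ (Fin m),
      MemLp v 2 (volume.restrict (Set.Ioi (0:ℝ))) →
      Tendsto (fun k => ∫ s in Set.Ioi (0:ℝ), ⟪u k s, v s⟫_ℝ) atTop
        (nhds (∫ s in Set.Ioi (0:ℝ), ⟪ubar s, v s⟫_ℝ)))
    (x : ℕ → ℝ → EuclideanSpace ℝ (Fin n))
    (xbar : ℝ → EuclideanSpace ℝ (Fin n))
    (hx_cont : ∀ k, ContinuousOn (x k) (Set.Icc 0 t))
    (hxbar_cont : ContinuousOn xbar (Set.Icc 0 t))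
    (hx_unif : TendstoUniformlyOn x xbar atTop (Set.Icc 0 t)) :
    Tendsto (fun k => ∫ s in (0:ℝ)..t, g (x k s) (u k s)) atTop
      (nhds (∫ s in (0:ℝ)..t, g (xbar s) (ubar s))) :=
  statement14_general n m g hg t ht u ubar hu hubar hweak x xbar hx_cont hxbar_cont hx_unif
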